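/- If μ > 0, σ > 0, d_min ≥ 1 is an integer, and |D| is a positive integer satisfying |D| ≤ (μ² √(d_min) / (μ² + σ²)) · exp((μ²/(2σ²))(d_min - 1)), then 1 - (|D| - 1) Φ(-(μ/σ)√(d_min)) ≥ Φ(μ/σ), where Φ is the standard normal CDF. (This is the sufficient condition under which dictionary decoding has higher expected bit accuracy than sign decoding.) -/

import Mathlib

/-!
Write `Φ(-x) = (2π)^{-1/2} ∫_x^∞ e^{-t²/2} dt`. Integrating the inequalities
`e^{-t²/2} ≤ (t/x) e^{-t²/2}` and `e^{-t²/2} (1 - 2/(1+t²)²) ≤ e^{-t²/2}`, whose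
antiderivatives are `-e^{-t²/2}` and `-(t/(1+t²)) e^{-t²/2}`, gives the Mills-ratio bounds
`x/(1+x²) e^{-x²/2} ≤ ∫_x^∞ e^{-t²/2} dt ≤ x⁻¹ e^{-x²/2}`.
With `t = μ/σ`, the hypothesis on `|D|` says exactly that the upper bound for
`(|D| - 1) Φ(-t √d_min)` lies below the lower bound for `Φ(-t) = 1 - Φ(t)`.
-/

open Real

/-- The standard normal CDF. -/
noncomputable def Phi (x : ℝ) : ℝ :=
  ∫ t in Set.Iic x, (Real.sqrt (2 * Real.pi))⁻¹ * Real.exp (-(t ^ 2) / 2)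

open MeasureTheory Set Filter Topology

lemma exp_neg_sq_div_two_eq (t : ℝ) : exp (-t ^ 2 / 2) = exp (-(1 / 2) * t ^ 2) := by
  ring_nf

lemma integrable_exp_neg_sq_div_two : Integrable fun t : ℝ => exp (-t ^ 2 / 2) := by
  simpa only [← exp_neg_sq_div_two_eq] using integrable_exp_neg_mul_sq (b := 1 / 2) (by norm_num)

lemma integral_exp_neg_sq_div_two : ∫ t : ℝ, exp (-t ^ 2 / 2) = √(2 * π) := by
  simpa [div_eq_inv_mul, mul_comm] using integral_gaussian (1 / 2)

lemma integrable_mul_exp_neg_sq_div_two : Integrable fun t : ℝ => t * exp (-t ^ 2 / 2) := by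
  simpa only [← exp_neg_sq_div_two_eq] using
    integrable_mul_exp_neg_mul_sq (b := 1 / 2) (by norm_num)

lemma hasDerivAt_exp_neg_sq_div_two (t : ℝ) :
    HasDerivAt (fun t => exp (-t ^ 2 / 2)) (-t * exp (-t ^ 2 / 2)) t := by
  have h : HasDerivAt (fun t : ℝ => -t ^ 2 / 2) (-t) t := by
    refine ((hasDerivAt_pow 2 t).neg.div_const 2).congr_deriv ?_
    push_cast
    ring
  simpa only [mul_comm] using h.exp

lemma tendsto_exp_neg_sq_div_two_atTop :
    Tendsto (fun t : ℝ => exp (-t ^ 2 / 2)) atTop (𝓝 0) := by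
  refine tendsto_exp_atBot.comp ?_
  simp_rw [neg_div]
  exact tendsto_neg_atTop_atBot.comp ((tendsto_pow_atTop two_ne_zero).atTop_div_const two_pos)

lemma integral_Ioi_mul_exp_neg_sq_div_two (a : ℝ) :
    ∫ t in Ioi a, t * exp (-t ^ 2 / 2) = exp (-a ^ 2 / 2) := by
  have hderiv : ∀ t ∈ Ioi a, HasDerivAt (fun t => -exp (-t ^ 2 / 2)) (t * exp (-t ^ 2 / 2)) t :=
    fun t _ => by simpa using (hasDerivAt_exp_neg_sq_div_two t).fun_neg
  rw [integral_Ioi_of_hasDerivAt_of_tendsto (by fun_prop) hderiv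
    integrable_mul_exp_neg_sq_div_two.integrableOn
    (by simpa using tendsto_exp_neg_sq_div_two_atTop.neg)]
  simp

lemma integral_Ioi_exp_neg_sq_div_two_le {a : ℝ} (ha : 0 < a) :
    ∫ t in Ioi a, exp (-t ^ 2 / 2) ≤ a⁻¹ * exp (-a ^ 2 / 2) := by
  rw [← integral_Ioi_mul_exp_neg_sq_div_two, ← integral_const_mul]
  refine setIntegral_mono_on integrable_exp_neg_sq_div_two.integrableOn ?_ measurableSet_Ioi
    fun t ht => ?_
  · exact (integrable_mul_exp_neg_sq_div_two.const_mul _).integrableOn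
  · rw [← mul_assoc]
    exact le_mul_of_one_le_left (exp_pos _).le ((one_le_inv_mul₀ ha).2 (le_of_lt ht))

lemma tendsto_div_one_add_sq_atTop : Tendsto (fun t : ℝ => t / (1 + t ^ 2)) atTop (𝓝 0) := by
  refine squeeze_zero' ?_ ?_ tendsto_inv_atTop_zero
  · filter_upwards [eventually_ge_atTop 0] with t ht
    positivity
  · filter_upwards [eventually_gt_atTop 0] with t ht
    rw [div_le_iff₀ (by positivity), inv_mul_eq_div, le_div_iff₀ ht]
    nlinarith

lemma integrable_exp_neg_sq_div_two_mul_one_sub :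
    Integrable fun t : ℝ => exp (-t ^ 2 / 2) * (1 - 2 / (1 + t ^ 2) ^ 2) := by
  have hcont : Continuous fun t : ℝ => 1 - 2 / (1 + t ^ 2) ^ 2 :=
    continuous_const.sub (continuous_const.div (by fun_prop) fun t => by positivity)
  refine integrable_exp_neg_sq_div_two.mul_bdd (c := 1) hcont.aestronglyMeasurable
    (ae_of_all _ fun t => ?_)
  have h : 0 < 2 / (1 + t ^ 2) ^ 2 := by positivity
  have h' : 2 / (1 + t ^ 2) ^ 2 ≤ 2 := div_le_self zero_le_two (one_le_pow₀ (by nlinarith))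
  rw [Real.norm_eq_abs, abs_le]
  constructor <;> linarith

lemma integral_Ioi_exp_neg_sq_div_two_mul_one_sub (a : ℝ) :
    ∫ t in Ioi a, exp (-t ^ 2 / 2) * (1 - 2 / (1 + t ^ 2) ^ 2) =
      a / (1 + a ^ 2) * exp (-a ^ 2 / 2) := by
  have hderiv : ∀ t, HasDerivAt (fun t => -(t / (1 + t ^ 2) * exp (-t ^ 2 / 2)))
      (exp (-t ^ 2 / 2) * (1 - 2 / (1 + t ^ 2) ^ 2)) t := by
    intro t
    have hpos : 1 + t ^ 2 ≠ 0 := by positivity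
    have hfrac : HasDerivAt (fun t : ℝ => t / (1 + t ^ 2)) ((1 - t ^ 2) / (1 + t ^ 2) ^ 2) t := by
      refine ((hasDerivAt_id' t).fun_div ((hasDerivAt_pow 2 t).const_add 1) hpos).congr_deriv ?_
      push_cast
      ring
    refine (hfrac.fun_mul (hasDerivAt_exp_neg_sq_div_two t)).fun_neg.congr_deriv ?_
    field_simp
    ring
  rw [integral_Ioi_of_hasDerivAt_of_tendsto (hderiv a).continuousAt.continuousWithinAt
    (fun t _ => hderiv t) integrable_exp_neg_sq_div_two_mul_one_sub.integrableOn
    (by simpa using (tendsto_div_one_add_sq_atTop.mul tendsto_exp_neg_sq_div_two_atTop).neg)]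
  simp

lemma le_integral_Ioi_exp_neg_sq_div_two (a : ℝ) :
    a / (1 + a ^ 2) * exp (-a ^ 2 / 2) ≤ ∫ t in Ioi a, exp (-t ^ 2 / 2) := by
  rw [← integral_Ioi_exp_neg_sq_div_two_mul_one_sub]
  refine setIntegral_mono_on integrable_exp_neg_sq_div_two_mul_one_sub.integrableOn
    integrable_exp_neg_sq_div_two.integrableOn measurableSet_Ioi fun t _ => ?_
  exact mul_le_of_le_one_right (exp_pos _).le (sub_le_self _ (by positivity))

lemma Phi_eq_mul_integral_Iic (x : ℝ) :
    Phi x = (√(2 * π))⁻¹ * ∫ t in Iic x, exp (-t ^ 2 / 2) :=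
  integral_const_mul _ _

lemma Phi_neg_eq_mul_integral_Ioi (x : ℝ) :
    Phi (-x) = (√(2 * π))⁻¹ * ∫ t in Ioi x, exp (-t ^ 2 / 2) := by
  rw [Phi_eq_mul_integral_Iic, ← integral_comp_neg_Ioi]
  simp

lemma Phi_add_Phi_neg (x : ℝ) : Phi x + Phi (-x) = 1 := by
  rw [Phi_eq_mul_integral_Iic, Phi_neg_eq_mul_integral_Ioi, ← mul_add,
    intervalIntegral.integral_Iic_add_Ioi
    integrable_exp_neg_sq_div_two.integrableOn integrable_exp_neg_sq_div_two.integrableOn,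
    integral_exp_neg_sq_div_two]
  exact inv_mul_cancel₀ (by positivity)

lemma Phi_neg_le {a : ℝ} (ha : 0 < a) :
    Phi (-a) ≤ (√(2 * π))⁻¹ * (a⁻¹ * exp (-a ^ 2 / 2)) := by
  rw [Phi_neg_eq_mul_integral_Ioi]
  gcongr
  exact integral_Ioi_exp_neg_sq_div_two_le ha

lemma le_Phi_neg (a : ℝ) :
    (√(2 * π))⁻¹ * (a / (1 + a ^ 2) * exp (-a ^ 2 / 2)) ≤ Phi (-a) := by
  rw [Phi_neg_eq_mul_integral_Ioi]
  gcongr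
  exact le_integral_Ioi_exp_neg_sq_div_two a

lemma mul_Phi_neg_le_Phi_neg {a b c : ℝ} (hb : 0 < b) (hc : 0 ≤ c)
    (h : c ≤ b * (a / (1 + a ^ 2)) * exp ((b ^ 2 - a ^ 2) / 2)) : c * Phi (-b) ≤ Phi (-a) := by
  have hexp : exp ((b ^ 2 - a ^ 2) / 2) * exp (-b ^ 2 / 2) = exp (-a ^ 2 / 2) := by
    rw [← exp_add]
    ring_nf
  calc c * Phi (-b) ≤ c * ((√(2 * π))⁻¹ * (b⁻¹ * exp (-b ^ 2 / 2))) := by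
        gcongr
        exact Phi_neg_le hb
    _ ≤ b * (a / (1 + a ^ 2)) * exp ((b ^ 2 - a ^ 2) / 2) *
          ((√(2 * π))⁻¹ * (b⁻¹ * exp (-b ^ 2 / 2))) := by
        gcongr
    _ = (√(2 * π))⁻¹ * (a / (1 + a ^ 2) * exp (-a ^ 2 / 2)) := by
        rw [← hexp]
        field_simp
    _ ≤ Phi (-a) := le_Phi_neg a

/-- if `μ, σ > 0`, `d_min ≥ 1` and
`|D| ≤ (μ²√d_min/(μ²+σ²)) exp((μ²/(2σ²))(d_min-1))`, then
`1 - (|D|-1) Φ(-(μ/σ)√d_min) ≥ Φ(μ/σ)`. -/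
theorem stmt9 (μ σ : ℝ) (hμ : 0 < μ) (hσ : 0 < σ)
    (dmin Dsize : ℕ) (hd : 1 ≤ dmin) (hD : 1 ≤ Dsize)
    (hcond : (Dsize : ℝ) ≤
      μ ^ 2 * Real.sqrt dmin / (μ ^ 2 + σ ^ 2) *
        Real.exp (μ ^ 2 / (2 * σ ^ 2) * ((dmin : ℝ) - 1))) :
    Phi (μ / σ) ≤ 1 - ((Dsize : ℝ) - 1) * Phi (-(μ / σ) * Real.sqrt dmin) := by
  have hs : 0 < √(dmin : ℝ) := Real.sqrt_pos.2 (by exact_mod_cast hd)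
  have hD_le_ratio : (Dsize : ℝ) - 1 ≤ μ / σ * √(dmin : ℝ) * (μ / σ / (1 + (μ / σ) ^ 2)) *
      exp (((μ / σ * √(dmin : ℝ)) ^ 2 - (μ / σ) ^ 2) / 2) := by
    calc (Dsize : ℝ) - 1 ≤ Dsize := sub_le_self _ zero_le_one
      _ ≤ _ := hcond
      _ = _ := by
        rw [mul_pow, Real.sq_sqrt (Nat.cast_nonneg _)]
        congr 2
        · field_simp
          ring
        · field_simp
  have htail := mul_Phi_neg_le_Phi_neg (mul_pos (div_pos hμ hσ) hs)
    (sub_nonneg.2 (by exact_mod_cast hD)) hD_le_ratio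
  rw [neg_mul]
  linarith [Phi_add_Phi_neg (μ / σ)]
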